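/- arXiv:1608.05832 — 2 statements merged into one kernel-verified Lean document; each statement's English description precedes it below -/
import Mathlib

section
/- The mutation operator M is topologically transitive on (X_N, d): for any pair of nonempty open sets U, V ⊆ X_N, there exists k > 0 such that M^k(U) ∩ V ≠ ∅. -/
/-!
Two mutation sequences are `d_S`-close as soon as they agree on a long prefix, since the `k`-th
entry only carries weight `10^{-(k+1)}`. Given `(G, S) ∈ U` and `(G', S') ∈ V`, keep the first `m`
entries of `S`, follow them by the `N` mutations writing `G'` position by position, then by `S'`.
For `m` large this point lies in `U`, and `M^{m+N}` maps it exactly onto `(G', S') ∈ V`.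
-/

/-- The discrete metric on ℝ: `ddelta x y = 1` if `x ≠ y`, and `0` otherwise. -/
noncomputable def ddelta (x y : ℝ) : ℝ := if x = y then 0 else 1

/-- `Fdel (x₁, x₂) = |x₁| + δ(0, x₂)`. -/
noncomputable def Fdel (x : ℝ × ℝ) : ℝ := |x.1| + ddelta 0 x.2

/-- A single mutation: a position in `{1,…,N}` together with a nucleotide in `{1,2,3,4}`
(encoded with `Fin N` and `Fin 4`). -/
abbrev Mut (N : ℕ) := Fin N × Fin 4

/-- A mutations sequence: an infinite sequence of mutations. -/
abbrev MutSeq (N : ℕ) := ℕ → Mut N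

/-- A genome of size `N`: a sequence of `N` nucleotides in `{1,2,3,4}` (encoded by `Fin 4`,
where `0,1,2,3` stand for the labels `1,2,3,4`, i.e. `A,C,G,T`). -/
abbrev Genome (N : ℕ) := Fin N → Fin 4

/-- The phase space `X_N = {1,2,3,4}^N × S_N`. -/
abbrev Phase (N : ℕ) := Genome N × MutSeq N

/-- A mutation regarded as a pair of real numbers, using the labels
`1,…,N` for positions and `1,2,3,4` for nucleotides. -/
noncomputable def mutR {N : ℕ} (m : Mut N) : ℝ × ℝ :=
  ((m.1.1 : ℝ) + 1, (m.2.1 : ℝ) + 1)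

/-- `d_G(G, Ǧ) = Σ_{k=1}^{N} δ(G_k, Ǧ_k)`, with `δ` the discrete metric. -/
noncomputable def dG {N : ℕ} (G G' : Genome N) : ℝ :=
  ∑ k : Fin N, if G k = G' k then (0 : ℝ) else 1

/-- `d_S(S, Š) = (9/N) Σ_{k=0}^{∞} F(S^k − Š^k)/10^(k+1)`. -/
noncomputable def dS {N : ℕ} (S S' : MutSeq N) : ℝ :=
  (9 / N) * ∑' k : ℕ, Fdel (mutR (S k) - mutR (S' k)) / 10 ^ (k + 1)

/-- The distance `d((G,S), (Ǧ,Š)) = d_G(G,Ǧ) + d_S(S,Š)` on the phase space. -/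
noncomputable def dX {N : ℕ} (X Y : Phase N) : ℝ := dG X.1 Y.1 + dS X.2 Y.2

/-- The mutation operator `M(G, S) = (G', σ(S))`: the nucleotide of `G` at position `(S⁰)₁`
is replaced by the nucleotide `(S⁰)₂`, and the mutations sequence is shifted. -/
noncomputable def Mop {N : ℕ} (X : Phase N) : Phase N :=
  (Function.update X.1 (X.2 0).1 (X.2 0).2, fun k => X.2 (k + 1))

/-- A set `U ⊆ X_N` is open for the metric `d` if around any of its points it
contains an open ball of positive radius. -/
def IsOpenD {N : ℕ} (U : Set (Phase N)) : Prop :=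
  ∀ x ∈ U, ∃ ε > 0, ∀ y, dX x y < ε → y ∈ U

section

variable {N : ℕ}

def applyMuts (G : Genome N) (l : List (Mut N)) : Genome N :=
  l.foldl (fun G m => Function.update G m.1 m.2) G

def writeMuts (G : Genome N) : List (Mut N) :=
  (List.finRange N).map fun i => (i, G i)

theorem applyMuts_append (G : Genome N) (l₁ l₂ : List (Mut N)) :
    applyMuts G (l₁ ++ l₂) = applyMuts (applyMuts G l₁) l₂ :=
  List.foldl_append

theorem Mop_iterate_append (G : Genome N) (l : List (Mut N)) (S : Stream' (Mut N)) :
    Mop^[l.length] (G, l ++ₛ S) = (applyMuts G l, S) := by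
  induction l generalizing G with
  | nil => rfl
  | cons a l ih => exact ih (Function.update G a.1 a.2)

theorem applyMuts_map_write (G G' : Genome N) (l : List (Fin N)) (i : Fin N) :
    applyMuts G (l.map fun j => (j, G' j)) i = if i ∈ l then G' i else G i := by
  induction l generalizing G with
  | nil => simp [applyMuts]
  | cons j l ih =>
    have := ih (Function.update G j (G' j))
    simp only [applyMuts, List.map_cons, List.foldl_cons] at this ⊢
    rw [this]
    by_cases hij : i = j <;> simp [hij]

theorem applyMuts_writeMuts (G G' : Genome N) : applyMuts G (writeMuts G') = G' := by
  funext i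
  simp [writeMuts, applyMuts_map_write]

theorem Fdel_mutR_sub_le (a b : Mut N) : Fdel (mutR a - mutR b) ≤ N := by
  have ha : (a.1 : ℝ) + 1 ≤ N := by exact_mod_cast a.1.2
  have hb : (b.1 : ℝ) + 1 ≤ N := by exact_mod_cast b.1.2
  have hpos : |((a.1 : ℝ) + 1) - ((b.1 : ℝ) + 1)| ≤ N - 1 := by
    rw [abs_le]
    constructor <;> linarith [(a.1 : ℕ).cast_nonneg (α := ℝ), (b.1 : ℕ).cast_nonneg (α := ℝ)]
  have hδ : ddelta 0 ((a.2 : ℝ) + 1 - ((b.2 : ℝ) + 1)) ≤ 1 := by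
    unfold ddelta; split <;> norm_num
  simp only [Fdel, mutR, Prod.fst_sub, Prod.snd_sub]
  linarith

theorem Fdel_nonneg (x : ℝ × ℝ) : 0 ≤ Fdel x := by
  unfold Fdel ddelta
  split <;> positivity

theorem dS_le_of_forall_lt_eq {S S' : MutSeq N} {m : ℕ} (h : ∀ k < m, S k = S' k) :
    dS S S' ≤ (1 / 10) ^ m := by
  set f : ℕ → ℝ := fun k => Fdel (mutR (S k) - mutR (S' k)) / 10 ^ (k + 1)
  have hN : (0 : ℝ) < N := by exact_mod_cast (S 0).1.pos
  have hf_le : ∀ k, f k ≤ N * (1 / 10) ^ (k + 1) := fun k => by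
    rw [one_div, inv_pow, ← div_eq_mul_inv]
    exact div_le_div_of_nonneg_right (Fdel_mutR_sub_le _ _) (by positivity)
  have hf_summable : Summable f :=
    .of_nonneg_of_le (fun k => div_nonneg (Fdel_nonneg _) (by positivity)) hf_le
      (((summable_geometric_of_lt_one (by norm_num) (by norm_num : (1 / 10 : ℝ) < 1)).mul_left
        (1 / 10)).mul_left (N : ℝ) |>.congr fun k => by ring)
  have hf_tail : ∑' k, f (k + m) ≤ N * (1 / 10) ^ (m + 1) * (1 - 1 / 10)⁻¹ :=
    hasSum_le (fun k => (hf_le (k + m)).trans_eq (by ring))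
      ((summable_nat_add_iff m).mpr hf_summable).hasSum
      ((hasSum_geometric_of_lt_one (by norm_num) (by norm_num)).mul_left _)
  have hf_head : ∑ k ∈ Finset.range m, f k = 0 :=
    Finset.sum_eq_zero fun k hk => by simp [f, h k (Finset.mem_range.mp hk), Fdel, ddelta]
  calc dS S S' = 9 / N * ∑' k, f (k + m) := by
        rw [dS, ← hf_summable.sum_add_tsum_nat_add m, hf_head, zero_add]
    _ ≤ 9 / N * (N * (1 / 10) ^ (m + 1) * (1 - 1 / 10)⁻¹) := by gcongr
    _ = (1 / 10) ^ m := by field_simp; ring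

theorem dS_append_le (l : List (Mut N)) (S S' : Stream' (Mut N)) :
    dS (l ++ₛ S) (l ++ₛ S') ≤ (1 / 10) ^ l.length :=
  dS_le_of_forall_lt_eq fun k hk => by
    change (l ++ₛ S).get k = (l ++ₛ S').get k
    rw [Stream'.get_append_left _ _ _ hk, Stream'.get_append_left _ _ _ hk]

end

theorem Mop_topologically_transitive_general (N : ℕ) :
    ∀ U V : Set (Phase N), IsOpenD U → IsOpenD V → U.Nonempty → V.Nonempty →
      ∃ k : ℕ, 0 < k ∧ ((Mop (N := N))^[k] '' U ∩ V).Nonempty := by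
  -- typed as `Stream'` rather than `MutSeq N` so that rewriting with the `++ₛ` lemmas typechecks
  rintro U V hU - ⟨⟨G, (S : Stream' (Mut N))⟩, hU_mem⟩ ⟨⟨G', (S' : Stream' (Mut N))⟩, hV_mem⟩
  obtain ⟨ε, hε_pos, hball⟩ := hU _ hU_mem
  obtain ⟨m, hm⟩ := exists_pow_lt_of_lt_one hε_pos (by norm_num : (1 : ℝ) / 10 < 1)
  let l := Stream'.take m S ++ writeMuts G'
  have hS : dS S (l ++ₛ S') < ε := calc
    dS S (l ++ₛ S') = dS (Stream'.take m S ++ₛ Stream'.drop m S)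
        (Stream'.take m S ++ₛ (writeMuts G' ++ₛ S')) := by
      rw [Stream'.append_take_drop, Stream'.append_append_stream]
    _ ≤ (1 / 10) ^ m := (dS_append_le _ _ _).trans_eq (by rw [Stream'.length_take])
    _ < ε := hm
  refine ⟨l.length, by simp [l, writeMuts, (S' 0).1.pos], (G', S'), ⟨(G, l ++ₛ S'), ?_, ?_⟩, hV_mem⟩
  · exact hball _ (by simpa [dX, dG] using hS)
  · rw [Mop_iterate_append, applyMuts_append, applyMuts_writeMuts]
    rfl

/-- The mutation operator `M` is topologically transitive on `(X_N, d)`: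
for any nonempty open sets `U, V ⊆ X_N`, there is `k > 0` with `M^k(U) ∩ V ≠ ∅`. -/
theorem Mop_topologically_transitive (N : ℕ) (hN : 1 ≤ N) :
    ∀ U V : Set (Phase N), IsOpenD U → IsOpenD V → U.Nonempty → V.Nonempty →
      ∃ k : ℕ, 0 < k ∧ ((Mop (N := N))^[k] '' U ∩ V).Nonempty :=
  Mop_topologically_transitive_general N
end

section
/- The dynamical system (X_N, M) is unstable: for every X ∈ X_N there exists ε > 0 such that for all δ₀ > 0 there exist Y ∈ X_N and n ∈ ℕ with d(X, Y) < δ₀ and d(M^n(X), M^n(Y)) ≥ ε. -/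
lemma Mop_iter_snd {N : ℕ} (X : Phase N) (n : ℕ) :
    ((Mop (N := N))^[n] X).2 = fun k => X.2 (k + n) := by
  induction n generalizing X with
  | zero => rfl
  | succ n ih =>
    rw [Function.iterate_succ_apply, ih]
    rfl

lemma Mop_iter_fst {N : ℕ} (n : ℕ) : ∀ X Y : Phase N, X.1 = Y.1 →
    (∀ k < n, X.2 k = Y.2 k) → ((Mop (N := N))^[n] X).1 = ((Mop (N := N))^[n] Y).1 := by
  induction n with
  | zero => intro X Y h _; simpa using h
  | succ n ih =>
    intro X Y h hk
    rw [Function.iterate_succ_apply, Function.iterate_succ_apply]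
    apply ih
    · simp [Mop, h, hk 0 (Nat.succ_pos n)]
    · intro k hkn
      exact hk (k + 1) (by omega)

lemma Fdel_self {N : ℕ} (m : Mut N) : Fdel (mutR m - mutR m) = 0 := by
  simp [Fdel, ddelta, mutR]

lemma dG_self {N : ℕ} (G : Genome N) : dG G G = 0 := by simp [dG]

lemma Fdel_nuc {N : ℕ} (p : Fin N) (a b : Fin 4) (h : a ≠ b) :
    Fdel (mutR (N := N) (p, a) - mutR (p, b)) = 1 := by
  have hv : (a.1 : ℝ) ≠ (b.1 : ℝ) := by
    exact_mod_cast fun hh => h (Fin.ext hh)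
  simp [Fdel, ddelta, mutR, Prod.sub_def, sub_eq_zero]
  exact fun hh => sub_ne_zero.mpr hv hh.symm

/-- The dynamical system `(X_N, M)` is unstable: for every `X ∈ X_N` there is `ε > 0`
such that for all `δ₀ > 0` one can find `Y ∈ X_N` and `n ∈ ℕ` with `d(X, Y) < δ₀` and
`d(M^n(X), M^n(Y)) ≥ ε`. -/
theorem Mop_unstable (N : ℕ) (hN : 1 ≤ N) :
    ∀ X : Phase N, ∃ ε > (0 : ℝ), ∀ δ₀ > (0 : ℝ),
      ∃ Y : Phase N, ∃ n : ℕ,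
        dX X Y < δ₀ ∧ ε ≤ dX ((Mop (N := N))^[n] X) ((Mop (N := N))^[n] Y) := by
  intro X
  have h1 : (1:ℝ) ≤ N := by exact_mod_cast hN
  have hN0 : (0:ℝ) < N := lt_of_lt_of_le one_pos h1
  refine ⟨9/(10*N), by positivity, fun δ₀ hδ => ?_⟩
  obtain ⟨n, hn⟩ := pow_unbounded_of_one_lt (9/(N*δ₀)) (by norm_num : (1:ℝ) < 10)
  set S := X.2 with hS
  have hne : (S n).2 ≠ (S n).2 + 1 := by
    have := (S n).2.isLt
    simp only [Fin.ext_iff, Fin.val_add, Fin.val_one, ne_eq]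
    omega
  set S' : MutSeq N := Function.update S n ((S n).1, (S n).2 + 1) with hS'
  have hS'n : S' n = ((S n).1, (S n).2 + 1) := Function.update_self n _ S
  have hS'k : ∀ k ≠ n, S' k = S k := fun k hk => Function.update_of_ne hk _ S
  refine ⟨(X.1, S'), n, ?_, ?_⟩
  · have ht : (∑' k : ℕ, Fdel (mutR (S k) - mutR (S' k)) / 10 ^ (k + 1))
        = 1/10^(n+1) := by
      rw [tsum_eq_single n]
      · rw [hS'n, Fdel_nuc _ _ _ hne]
      · intro k hk
        rw [hS'k k hk, Fdel_self, zero_div]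
    have hdx : dX X (X.1, S') = (9/N) * (1/10^(n+1)) := by
      rw [dX, dG_self, dS, ← hS, ht, zero_add]
    rw [hdx]
    have hle : (10:ℝ)^n ≤ 10^(n+1) := by
      apply pow_le_pow_right₀ (by norm_num) (Nat.le_succ n)
    have key : 9 < 10^(n+1)*((N:ℝ)*δ₀) :=
      (div_lt_iff₀ (by positivity)).mp (lt_of_lt_of_le hn hle)
    rw [div_mul_div_comm, mul_one, div_lt_iff₀ (by positivity)]
    nlinarith [key]
  · have hfst : ((Mop (N := N))^[n] X).1 = ((Mop (N := N))^[n] (X.1, S')).1 :=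
      Mop_iter_fst n X (X.1, S') rfl (fun k hk => (hS'k k (by omega)).symm)
    have ht2 : (∑' k : ℕ, Fdel (mutR (S (k + n)) - mutR (S' (k + n))) / 10 ^ (k + 1))
        = 1/10 := by
      rw [tsum_eq_single 0]
      · rw [Nat.zero_add, hS'n, Fdel_nuc _ _ _ hne]
        norm_num
      · intro k hk
        rw [hS'k (k + n) (by omega), Fdel_self, zero_div]
    rw [dX, Mop_iter_snd, Mop_iter_snd, hfst, dG_self, zero_add, dS, ← hS]
    simp only []
    rw [ht2]
    rw [div_mul_div_comm, mul_one, mul_comm]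
end
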